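/- For every natural number n ≥ 3, the numbers p n 1 satisfy the linear fractional recurrence p n 1 = (1 + 2 · p (n−1) 1) / (2 + 2 · p (n−1) 1) (Watrous's conjectured recurrence). -/

import Mathlib

noncomputable def A : ℝ := 2 + Real.sqrt 2
noncomputable def B : ℝ := 2 - Real.sqrt 2

/-- The absorption probability of the two-barrier Hadamard quantum walk on `{0,…,n}`
started at site `j`, given by the explicit formula of Bach–Borisov. -/
noncomputable def p (n j : ℕ) : ℝ :=
  (Real.sqrt 2 / 4) * ((A ^ (n - j) - B ^ (n - j)) * (A ^ (j - 1) + B ^ (j - 1))) /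
    (A ^ (n - 1) + B ^ (n - 1))

/-!
With `r m = (Aᵐ - Bᵐ) / (Aᵐ + Bᵐ)` one has `p n 1 = (√2/2) r (n-1)`. Since `A = 2 + √2` and
`B = 2 - √2`, dividing numerator and denominator of `r (m+1)` by `Aᵐ + Bᵐ` gives the addition
formula `r (m+1) = (2 r m + √2) / (2 + √2 r m)`, the analogue of `tanh (u + v)`; substituting
`r = (2/√2) p` and using `√2² = 2` turns it into Watrous's recurrence.
-/

theorem two_add_sub_two_sub_div_eq {K : Type*} [Field K] (s x y : K) (hxy : x + y ≠ 0) :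
    ((2 + s) * x - (2 - s) * y) / ((2 + s) * x + (2 - s) * y) =
      (2 * ((x - y) / (x + y)) + s) / (2 + s * ((x - y) / (x + y))) := by
  rw [← div_div_div_cancel_right₀ hxy]
  congr 1 <;> field_simp <;> ring

theorem half_mul_div_eq_of_sq_eq_two {K : Type*} [Field K] [NeZero (2 : K)] (s t : K)
    (hs : s ^ 2 = 2) :
    s / 2 * ((2 * t + s) / (2 + s * t)) = (1 + 2 * (s / 2 * t)) / (2 + 2 * (s / 2 * t)) := by
  rw [mul_div_assoc']
  congr 1
  · field_simp
    linear_combination hs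
  · field_simp

noncomputable def ratio (m : ℕ) : ℝ := (A ^ m - B ^ m) / (A ^ m + B ^ m)

theorem p_one (n : ℕ) : p n 1 = Real.sqrt 2 / 2 * ratio (n - 1) := by
  simp only [p, ratio, Nat.sub_self, pow_zero]
  ring

theorem B_pos : 0 < B := by
  have : Real.sqrt 2 < 2 := by
    rw [Real.sqrt_lt' two_pos]
    norm_num
  simp [B, this]

theorem ratio_succ (m : ℕ) :
    ratio (m + 1) = (2 * ratio m + Real.sqrt 2) / (2 + Real.sqrt 2 * ratio m) := by
  have hAB : A ^ m + B ^ m ≠ 0 := by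
    have : 0 < A := by unfold A; positivity
    have := B_pos
    positivity
  rw [ratio, ratio, pow_succ', pow_succ', ← two_add_sub_two_sub_div_eq _ _ _ hAB]
  rfl

/-- Watrous's recurrence: for `n ≥ 3`,
`p n 1 = (1 + 2 p (n-1) 1) / (2 + 2 p (n-1) 1)`. -/
theorem watrous_recurrence (n : ℕ) (hn : 3 ≤ n) :
    p n 1 = (1 + 2 * p (n - 1) 1) / (2 + 2 * p (n - 1) 1) := by
  obtain ⟨m, rfl⟩ : ∃ m, n = m + 2 := ⟨n - 2, by omega⟩
  rw [p_one, p_one, show m + 2 - 1 = m + 1 by rfl, Nat.add_sub_cancel, ratio_succ]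
  exact half_mul_div_eq_of_sq_eq_two _ _ (Real.sq_sqrt zero_le_two)
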